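/- arXiv:1607.02483 — 2 statements merged into one kernel-verified Lean document; each statement's English description precedes it below -/
import Mathlib

section
/- For every positive integer n, the sum over j from 0 to n-1 of 1/(2j+1) times (the sum over k from 0 to j of (-1)^(n-k) * C(n,k) * C(n+k,k)) equals H_{2n} - (5/2)*H_n + H_{⌊n/2⌋}, as an identity of rational numbers. -/
/-!
The inner sums are partial sums of the coefficients `c n k = (-1)^k C(n,k) C(n+k,k)` of the
shifted Legendre polynomial `P̃ₙ`. Exchanging the two summations turns the left side into
`(-1)^n ∑ₖ c n k (Oₙ - Oₖ)`, where `Oₘ = ∑_{j<m} 1/(2j+1) = H_{2m} - H_m/2`. Since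
`∑ₖ c n k = P̃ₙ(1) = (-1)^n`, everything reduces to `Vₙ = ∑ₖ c n k Oₖ`. Feeding the three-term
recurrence of the Legendre polynomials into `Vₙ`, together with `∑ₖ c n k / (2k+1) = 1/(2n+1)`,
gives a second-order recurrence for `Vₙ`, which `(-1)^n (2 Hₙ - H_{⌊n/2⌋})` satisfies as well.
-/

/-- The `n`-th harmonic number as a rational number. -/
def H (n : ℕ) : ℚ := ∑ j ∈ Finset.range n, 1 / ((j : ℚ) + 1)

open Finset Polynomial

lemma neg_one_pow_sq {R : Type*} [Monoid R] [HasDistribNeg R] (n : ℕ) :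
    ((-1 : R) ^ n) ^ 2 = 1 := by
  rw [← pow_mul, pow_mul', neg_one_sq, one_pow]

lemma cast_add_one_sub_mul_choose {R : Type*} [CommRing R] (n k : ℕ) :
    ((n : R) + 1 - k) * (n + 1).choose k = (n + 1) * n.choose k := by
  rcases le_or_gt k (n + 1) with h | h
  · rw [← Nat.cast_add_one, ← Nat.cast_sub h, mul_comm, ← Nat.cast_mul, ← Nat.cast_mul,
      ← Nat.choose_mul_succ_eq, mul_comm]
  · simp [Nat.choose_eq_zero_of_lt h, Nat.choose_eq_zero_of_lt (show n < k by omega)]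

lemma cast_sub_mul_choose {R : Type*} [CommRing R] (n k : ℕ) :
    ((n : R) - k) * n.choose k = (k + 1) * n.choose (k + 1) := by
  rcases le_or_gt k n with h | h
  · rw [← Nat.cast_sub h, mul_comm, ← Nat.cast_mul, ← Nat.choose_succ_right_eq]
    push_cast
    ring
  · simp [Nat.choose_eq_zero_of_lt h, Nat.choose_eq_zero_of_lt (show n < k + 1 by omega)]

lemma cast_add_one_mul_choose {R : Type*} [CommSemiring R] (n k : ℕ) :
    ((n : R) + 1) * n.choose k = (n + 1).choose (k + 1) * (k + 1) := by
  exact_mod_cast congrArg (Nat.cast : ℕ → R) (Nat.add_one_mul_choose_eq n k)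

-- The coefficient of `X ^ k` in `Polynomial.shiftedLegendre n`.
def legendreCoeff (n k : ℕ) : ℚ := (-1) ^ k * n.choose k * (n + k).choose k

lemma legendreCoeff_eq_zero {n k : ℕ} (h : n < k) : legendreCoeff n k = 0 := by
  simp [legendreCoeff, Nat.choose_eq_zero_of_lt h]

lemma legendreCoeff_succ_left (n k : ℕ) :
    ((n : ℚ) + 1 - k) * legendreCoeff (n + 1) k = (n + k + 1) * legendreCoeff n k := by
  have h₁ := cast_add_one_sub_mul_choose (R := ℚ) n k
  have h₂ := cast_add_one_sub_mul_choose (R := ℚ) (n + k) k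
  push_cast at h₂
  rw [legendreCoeff, legendreCoeff, Nat.add_right_comm]
  linear_combination (-1) ^ k * (((n + k + 1).choose k : ℚ) * h₁ + (n.choose k : ℚ) * h₂)

lemma legendreCoeff_succ_right (n k : ℕ) :
    ((k : ℚ) + 1) ^ 2 * legendreCoeff n (k + 1) =
      -(((n : ℚ) - k) * (n + k + 1)) * legendreCoeff n k := by
  have h₁ := cast_sub_mul_choose (R := ℚ) n k
  have h₂ := cast_add_one_mul_choose (R := ℚ) (n + k) k
  push_cast at h₂
  rw [legendreCoeff, legendreCoeff, ← add_assoc]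
  linear_combination (-1) ^ k * ((n + k + 1).choose (k + 1) * ((k : ℚ) + 1) * h₁
    + ((n : ℚ) - k) * n.choose k * h₂)

lemma legendreCoeff_succ_succ (n k : ℕ) :
    ((k : ℚ) + 1) ^ 2 * legendreCoeff (n + 1) (k + 1) =
      -(((n : ℚ) + k + 1) * (n + k + 2)) * legendreCoeff n k := by
  have h₁ := cast_add_one_mul_choose (R := ℚ) n k
  have h₂ := cast_add_one_mul_choose (R := ℚ) (n + k + 1) k
  have h₃ := cast_add_one_sub_mul_choose (R := ℚ) (n + k) k
  push_cast at h₂ h₃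
  rw [legendreCoeff, legendreCoeff, show n + 1 + (k + 1) = n + k + 1 + 1 by omega]
  linear_combination (-1) ^ k * (((n : ℚ) + 1) * n.choose k * h₂
    + ((k : ℚ) + 1) * (n + k + 1 + 1).choose (k + 1) * h₁ - ((n : ℚ) + k + 2) * n.choose k * h₃)

lemma legendreCoeff_three_term (n k : ℕ) :
    ((n : ℚ) + 2) * legendreCoeff (n + 2) (k + 1) + (n + 1) * legendreCoeff n (k + 1) =
      (2 * n + 3) * (legendreCoeff (n + 1) (k + 1) - 2 * legendreCoeff (n + 1) k) := by
  have h₁ := legendreCoeff_succ_succ (n + 1) k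
  have h₂ := legendreCoeff_succ_right (n + 1) k
  have h₃ := legendreCoeff_succ_right n k
  have h₄ := legendreCoeff_succ_left n k
  push_cast at *
  have hk : ((k : ℚ) + 1) ^ 2 ≠ 0 := by positivity
  apply mul_left_cancel₀ hk
  linear_combination (n + 2) * h₁ + (n + 1) * h₃ - (2 * n + 3) * h₂ + (n + 1) * ((n : ℚ) - k) * h₄

def legendreSum (n : ℕ) (f : ℕ → ℚ) : ℚ := ∑ k ∈ range (n + 1), legendreCoeff n k * f k

lemma legendreSum_eq_sum_range {n N : ℕ} (h : n < N) (f : ℕ → ℚ) :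
    legendreSum n f = ∑ k ∈ range N, legendreCoeff n k * f k := by
  refine sum_subset (range_subset_range.2 h) fun k _ hkn => ?_
  rw [legendreCoeff_eq_zero (by simpa using hkn), zero_mul]

lemma legendreSum_one (n : ℕ) : legendreSum n 1 = (-1) ^ n := by
  have h := shiftedLegendre_eval_symm n (1 : ℚ)
  rw [sub_self, ← coeff_zero_eq_aeval_zero', coeff_shiftedLegendre, shiftedLegendre] at h
  simp only [legendreSum, legendreCoeff, Pi.one_apply, mul_one]
  rw [sum_congr rfl fun k _ => by rw [← Nat.choose_symm_add]]
  simpa using h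

lemma legendreSum_eq_sum_range_succ {n N : ℕ} (h : n < N + 1) {f : ℕ → ℚ} (hf : f 0 = 0) :
    legendreSum n f = ∑ k ∈ range N, legendreCoeff n (k + 1) * f (k + 1) := by
  rw [legendreSum_eq_sum_range h, sum_range_succ', hf, mul_zero, add_zero]

lemma legendreSum_inv_two_mul_add_one (n : ℕ) :
    legendreSum n (fun k => 1 / (2 * k + 1)) = 1 / (2 * n + 1) := by
  suffices h : (2 * (n : ℚ) + 1) * legendreSum n (fun k => 1 / (2 * k + 1)) = 1 by
    rw [eq_div_iff (by positivity), mul_comm, h]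
  induction n with
  | zero => simp [legendreSum, legendreCoeff]
  | succ n ih =>
    have step : (2 * (n : ℚ) + 3) * legendreSum (n + 1) (fun k => 1 / (2 * k + 1))
        - (2 * n + 1) * legendreSum n (fun k => 1 / (2 * k + 1))
        = legendreSum (n + 1) 1 + legendreSum n 1 := by
      simp only [legendreSum_eq_sum_range (show n + 1 < n + 2 by omega),
        legendreSum_eq_sum_range (show n < n + 2 by omega)]
      rw [mul_sum, mul_sum, ← sum_sub_distrib, ← sum_add_distrib]
      refine sum_congr rfl fun k _ => ?_
      rw [Pi.one_apply]
      field_simp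
      linear_combination 2 * legendreCoeff_succ_left n k
    rw [legendreSum_one, legendreSum_one, pow_succ, ih] at step
    push_cast
    linear_combination step

def oddHarmonic (n : ℕ) : ℚ := ∑ j ∈ range n, 1 / (2 * (j : ℚ) + 1)

lemma oddHarmonic_succ (n : ℕ) : oddHarmonic (n + 1) = oddHarmonic n + 1 / (2 * n + 1) :=
  sum_range_succ _ n

lemma H_succ (n : ℕ) : H (n + 1) = H n + 1 / (n + 1) :=
  sum_range_succ _ n

lemma oddHarmonic_eq (n : ℕ) : oddHarmonic n = H (2 * n) - H n / 2 := by
  induction n with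
  | zero => simp [oddHarmonic, H]
  | succ n ih =>
    rw [oddHarmonic_succ, ih, show 2 * (n + 1) = 2 * n + 1 + 1 by ring, H_succ, H_succ, H_succ]
    push_cast
    field_simp
    ring

lemma legendreSum_oddHarmonic_recurrence (n : ℕ) :
    ((n : ℚ) + 2) * legendreSum (n + 2) oddHarmonic + (n + 1) * legendreSum n oddHarmonic =
      -(2 * n + 3) * legendreSum (n + 1) oddHarmonic - 2 := by
  have h₀ : oddHarmonic 0 = 0 := sum_range_zero _
  calc _ = ∑ k ∈ range (n + 2), (2 * (n : ℚ) + 3) * (legendreCoeff (n + 1) (k + 1) *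
          oddHarmonic (k + 1) - 2 * (legendreCoeff (n + 1) k * oddHarmonic k +
            legendreCoeff (n + 1) k * (1 / (2 * k + 1)))) := by
        rw [legendreSum_eq_sum_range_succ (N := n + 2) (by omega) h₀,
          legendreSum_eq_sum_range_succ (N := n + 2) (by omega) h₀, mul_sum, mul_sum,
          ← sum_add_distrib]
        refine sum_congr rfl fun k _ => ?_
        rw [oddHarmonic_succ]
        linear_combination (oddHarmonic k + 1 / (2 * k + 1)) * legendreCoeff_three_term n k
    _ = (2 * (n : ℚ) + 3) * (legendreSum (n + 1) oddHarmonic - 2 * (legendreSum (n + 1)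
          oddHarmonic + legendreSum (n + 1) (fun k => 1 / (2 * k + 1)))) := by
        have hV := legendreSum_eq_sum_range (show n + 1 < n + 2 by omega) oddHarmonic
        have hV' := legendreSum_eq_sum_range_succ (show n + 1 < n + 2 + 1 by omega) h₀
        have hF := legendreSum_eq_sum_range (show n + 1 < n + 2 by omega) fun k => 1 / (2 * k + 1)
        rw [← mul_sum, sum_sub_distrib, ← mul_sum, sum_add_distrib, ← hV, ← hV', ← hF]
    _ = _ := by
        rw [legendreSum_inv_two_mul_add_one]
        push_cast
        field_simp
        ring

lemma add_one_mul_harmonic_sub (n : ℕ) :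
    ((n : ℚ) + 1) * ((2 * H (n + 1) - H ((n + 1) / 2)) - (2 * H n - H (n / 2))) =
      1 + (-1) ^ n := by
  rcases Nat.even_or_odd' n with ⟨m, rfl | rfl⟩
  · rw [show (2 * m + 1) / 2 = 2 * m / 2 by omega, H_succ, pow_mul]
    push_cast
    field_simp
    ring
  · rw [show (2 * m + 1 + 1) / 2 = m + 1 by omega, show (2 * m + 1) / 2 = m by omega, H_succ,
      H_succ m, pow_succ, pow_mul]
    push_cast
    field_simp
    ring

lemma legendreSum_oddHarmonic (n : ℕ) :
    legendreSum n oddHarmonic = (-1) ^ n * (2 * H n - H (n / 2)) := by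
  induction n using Nat.twoStepInduction with
  | zero => simp [legendreSum, legendreCoeff, oddHarmonic, H]
  | one => simp [legendreSum, legendreCoeff, oddHarmonic, H, sum_range_succ]
  | more n ih₀ ih₁ =>
    have hrec := legendreSum_oddHarmonic_recurrence n
    have hdiff₀ := add_one_mul_harmonic_sub n
    have hdiff₁ := add_one_mul_harmonic_sub (n + 1)
    rw [ih₀, ih₁] at hrec
    apply mul_left_cancel₀ (show (n : ℚ) + 2 ≠ 0 by positivity)
    push_cast at hdiff₁ ⊢
    linear_combination hrec - (-1) ^ n * hdiff₁ + (-1) ^ n * hdiff₀ + 2 * neg_one_pow_sq (R := ℚ) n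

lemma sum_mul_sum_range_succ_comm {R : Type*} [CommSemiring R] (a t : ℕ → R) (n : ℕ) :
    ∑ j ∈ range n, a j * ∑ k ∈ range (j + 1), t k = ∑ k ∈ range n, t k * ∑ j ∈ Ico k n, a j := by
  simp only [range_eq_Ico, mul_sum]
  rw [← sum_Ico_Ico_comm]
  exact sum_congr rfl fun k _ => sum_congr rfl fun j _ => mul_comm _ _

lemma neg_one_pow_sub {k n : ℕ} (h : k ≤ n) :
    (-1 : ℚ) ^ (n - k) = (-1) ^ n * (-1) ^ k := by
  obtain ⟨d, rfl⟩ := Nat.exists_eq_add_of_le h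
  rw [Nat.add_sub_cancel_left, pow_add, mul_comm, ← mul_assoc, ← pow_add, ← two_mul, pow_mul,
    neg_one_sq, one_pow, one_mul]

theorem stmt_4_general (n : ℕ) :
    ∑ j ∈ Finset.range n, (1 / (2 * (j : ℚ) + 1)) *
        ∑ k ∈ Finset.range (j + 1),
          (-1 : ℚ)^(n - k) * (n.choose k) * ((n + k).choose k) =
      H (2 * n) - (5 / 2) * H n + H (n / 2) := by
  have hsign : ∀ j ∈ range n, ∑ k ∈ range (j + 1),
      (-1 : ℚ) ^ (n - k) * (n.choose k) * ((n + k).choose k) =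
        (-1) ^ n * ∑ k ∈ range (j + 1), legendreCoeff n k := by
    intro j hj
    rw [mul_sum]
    refine sum_congr rfl fun k hk => ?_
    rw [legendreCoeff, neg_one_pow_sub (by simp at hj hk; omega)]
    ring
  calc _ = (-1) ^ n * ∑ k ∈ range (n + 1), legendreCoeff n k * (oddHarmonic n - oddHarmonic k) := by
        rw [sum_congr rfl fun j hj => by rw [hsign j hj, mul_left_comm], ← mul_sum,
          sum_mul_sum_range_succ_comm, sum_range_succ, sub_self, mul_zero, add_zero]
        refine congrArg _ (sum_congr rfl fun k hk => ?_)
        rw [sum_Ico_eq_sub _ (mem_range.1 hk).le]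
        rfl
    _ = (-1) ^ n * (legendreSum n 1 * oddHarmonic n - legendreSum n oddHarmonic) := by
        simp only [legendreSum, mul_sub, sum_sub_distrib, sum_mul, Pi.one_apply, mul_one]
    _ = _ := by
        rw [legendreSum_one, legendreSum_oddHarmonic, oddHarmonic_eq]
        linear_combination (H (2 * n) - H n / 2 - (2 * H n - H (n / 2))) * neg_one_pow_sq (R := ℚ) n

theorem stmt_4 (n : ℕ) (hn : 0 < n) :
    ∑ j ∈ Finset.range n, (1 / (2 * (j : ℚ) + 1)) *
        ∑ k ∈ Finset.range (j + 1),
          (-1 : ℚ)^(n - k) * (n.choose k) * ((n + k).choose k) =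
      H (2 * n) - (5 / 2) * H n + H (n / 2) :=
  stmt_4_general n
end

section
/- Let p > 3 be a prime and set p' = (p-1)/2. Then C(p-1, p') times the sum over a from p' to p-1 of C(a, p')^2 is congruent to 1 modulo p^2. -/
/-!
Write `p = 2m + 1` and work in `ZMod (p ^ 2)` with harmonic numbers `H`. Since
`m + j ≡ -(m + 1 - j) [mod p]`, the Pascal recurrence gives
`(-1)^k C(m+k, k) ≡ C(m, k) (1 - p (H m - H (m - k)))`, and likewise
`C(a+p, k) ≡ C(a, k) (1 + p (H a - H (a - k)))` for `a < p`. Comparing Vandermonde's identity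
for `(m + p) + m` with the one for `m + m` yields
`∑ C(m, k)^2 (H m - H (m - k)) ≡ C(2m, m) (H (2m) - H m) [mod p]`. Hence
`∑ C(m+k, k)^2 ≡ C(2m, m) (1 - 2p (H (2m) - H m))` and `C(2m, m)^2 ≡ 1 - 2p H m`, so the
product is `≡ 1 - 2p H (p - 1) ≡ 1 [mod p^2]`, because `H (p - 1) ≡ 0 [mod p]`.
-/

open Finset

-- `(i + 1)⁻¹` is a junk value unless `i + 1` is coprime to `n`.
def harmonicZMod (n k : ℕ) : ZMod n := ∑ i ∈ range k, ((i + 1 : ℕ) : ZMod n)⁻¹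

@[simp]
lemma harmonicZMod_zero (n : ℕ) : harmonicZMod n 0 = 0 :=
  sum_range_zero _

lemma harmonicZMod_succ (n k : ℕ) :
    harmonicZMod n (k + 1) = harmonicZMod n k + ((k + 1 : ℕ) : ZMod n)⁻¹ :=
  sum_range_succ _ _

lemma sum_range_natCast_choose_sq {S : Type*} [CommSemiring S] (n : ℕ) :
    ∑ i ∈ range (n + 1), (n.choose i : S) ^ 2 = n.centralBinom := by
  rw [Nat.centralBinom_eq_two_mul_choose]
  exact_mod_cast congrArg (Nat.cast : ℕ → S) (Nat.sum_range_choose_sq n)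

namespace ZModPrimeSq

variable {p : ℕ}

-- `(2 : ℕ)`: with a bare `2` the exponent's type is still unknown while a statement is
-- elaborated, and `ℕ`-valued terms are then not coerced into `R`.
local notation "R" => ZMod (p ^ (2 : ℕ))
local notation "H" => harmonicZMod (p ^ (2 : ℕ))

lemma natCast_sq_eq_zero (p : ℕ) : (p : ZMod (p ^ 2)) ^ 2 = 0 := by
  exact_mod_cast ZMod.natCast_self (p ^ 2)

lemma isUnit_natCast (hp : p.Prime) {j : ℕ} (hj0 : 0 < j) (hjp : j < p) : IsUnit (j : R) :=
  (ZMod.isUnit_natCast_iff_not_dvd_pow hp two_pos).2 (Nat.not_dvd_of_pos_of_lt hj0 hjp)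

lemma eq_choose_mul_of_recurrence (hp : p.Prime) {a : ℕ} (ha : a < p) (t : R) {c : ℕ → R}
    (hc0 : c 0 = 1) (hc : ∀ k < a, (k + 1 : ℕ) * c (k + 1) = c k * ((a - k : ℕ) + t * p)) :
    ∀ k ≤ a, c k = a.choose k * (1 + t * p * (H a - H (a - k))) := by
  intro k hk
  induction k with
  | zero => simp [hc0]
  | succ k ih =>
    obtain ⟨j, hj⟩ : ∃ j, a - k = j + 1 := ⟨a - k - 1, by omega⟩
    have hj' : a - (k + 1) = j := by omega
    have hinv : ((j + 1 : ℕ) : R) * ((j + 1 : ℕ) : R)⁻¹ = 1 :=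
      ZMod.mul_inv_of_unit _ (isUnit_natCast hp (by omega) (by omega))
    have hchoose : (a.choose (k + 1) : R) * (k + 1 : ℕ) = a.choose k * (j + 1 : ℕ) := by
      rw [← Nat.cast_mul, ← Nat.cast_mul, ← hj, Nat.choose_succ_right_eq]
    apply (isUnit_natCast hp (j := k + 1) (by omega) (by omega)).mul_left_cancel
    rw [hc k hk, ih (by omega), hj, hj', harmonicZMod_succ]
    push_cast at hinv hchoose ⊢
    linear_combination
      (a.choose k * t ^ 2 * (H a - H j - ((j : R) + 1)⁻¹)) * natCast_sq_eq_zero p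
      - (a.choose k * t * p) * hinv - (1 + t * p * (H a - H j)) * hchoose

lemma choose_add_prime (hp : p.Prime) {a k : ℕ} (ha : a < p) (hk : k ≤ a) :
    ((a + p).choose k : R) = a.choose k * (1 + p * (H a - H (a - k))) := by
  have hc : ∀ j < a, ((j + 1 : ℕ) : R) * ((a + p).choose (j + 1) : R) =
      (a + p).choose j * ((a - j : ℕ) + 1 * p) := by
    intro j hj
    rw [one_mul, mul_comm, ← Nat.cast_add, ← Nat.cast_mul, ← Nat.cast_mul,
      Nat.choose_succ_right_eq, show a + p - j = a - j + p by omega]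
  simpa using eq_choose_mul_of_recurrence hp ha 1
    (c := fun k => ((a + p).choose k : R)) (by simp) hc k hk

lemma neg_one_pow_mul_choose_add (hp : p.Prime) {m k : ℕ} (hm : p = 2 * m + 1) (hk : k ≤ m) :
    (-1) ^ k * ((m + k).choose k : R) = m.choose k * (1 - p * (H m - H (m - k))) := by
  have hc : ∀ j < m, ((j + 1 : ℕ) : R) * ((-1) ^ (j + 1) * ((m + (j + 1)).choose (j + 1) : R)) =
      (-1) ^ j * ((m + j).choose j) * ((m - j : ℕ) + (-1) * p) := by
    intro j hj
    have hp' : (p : R) = (m - j : ℕ) + (m + j + 1 : ℕ) := by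
      rw [← Nat.cast_add, hm]; congr 1; omega
    have hchoose := congrArg (Nat.cast : ℕ → R) (Nat.add_one_mul_choose_eq (m + j) j)
    rw [hp', ← add_assoc]
    push_cast at hchoose ⊢
    linear_combination (-1) ^ j * hchoose
  simpa [sub_eq_add_neg] using eq_choose_mul_of_recurrence hp (a := m) (by omega) (-1)
    (c := fun k => (-1) ^ k * ((m + k).choose k : R)) (by simp) hc k hk

lemma natCast_mul_inv_sub (hp : p.Prime) {j : ℕ} (hj0 : 0 < j) (hjp : j < p) :
    (p : R) * ((p - j : ℕ) : R)⁻¹ = -(p * (j : R)⁻¹) := by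
  have hj := ZMod.mul_inv_of_unit _ (isUnit_natCast hp hj0 hjp)
  have hpj := ZMod.mul_inv_of_unit _ (isUnit_natCast hp (j := p - j) (by omega) (by omega))
  apply (isUnit_natCast hp (j := p - j) (by omega) (by omega)).mul_left_cancel
  rw [Nat.cast_sub hjp.le] at hpj ⊢
  linear_combination p * hpj + (j : R)⁻¹ * natCast_sq_eq_zero p - p * hj

-- Pair `j` with `p - j`.
lemma natCast_mul_harmonicZMod_sub_one (hp : p.Prime) (hp2 : p ≠ 2) :
    (p : R) * H (p - 1) = 0 := by
  have hneg : (p : R) * H (p - 1) = -((p : R) * H (p - 1)) := by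
    simp only [harmonicZMod, mul_sum]
    conv_lhs => rw [← sum_range_reflect]
    rw [← sum_neg_distrib]
    refine sum_congr rfl fun i hi => ?_
    rw [mem_range] at hi
    rw [show p - 1 - 1 - i + 1 = p - (i + 1) by omega,
      natCast_mul_inv_sub hp (by omega) (by omega)]
  have h2 : IsUnit (2 : R) := by
    exact_mod_cast isUnit_natCast hp (j := 2) two_pos (lt_of_le_of_ne hp.two_le (Ne.symm hp2))
  refine h2.mul_right_eq_zero.1 ?_
  linear_combination hneg

lemma natCast_mul_sum_choose_sq_mul (hp : p.Prime) {m : ℕ} (hm : 2 * m < p) :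
    (p : R) * ∑ k ∈ range (m + 1), (m.choose k : R) ^ 2 * (H m - H (m - k)) =
      p * m.centralBinom * (H (2 * m) - H m) := by
  have hV := congrArg (Nat.cast : ℕ → R) (Nat.add_choose_eq (m + p) m m)
  rw [Nat.sum_antidiagonal_eq_sum_range_succ_mk, show m + p + m = 2 * m + p by omega] at hV
  push_cast at hV
  have hterm : ∀ k ∈ range (m + 1), ((m + p).choose k : R) * m.choose (m - k) =
      (m.choose k : R) ^ 2 + p * ((m.choose k : R) ^ 2 * (H m - H (m - k))) := by
    intro k hk
    have hkm := Nat.lt_succ_iff.1 (mem_range.1 hk)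
    rw [choose_add_prime hp (by omega) hkm, Nat.choose_symm hkm]
    ring
  rw [choose_add_prime hp hm (by omega), show 2 * m - m = m by omega, sum_congr rfl hterm,
    sum_add_distrib, sum_range_natCast_choose_sq, ← mul_sum,
    ← Nat.centralBinom_eq_two_mul_choose] at hV
  linear_combination -hV

lemma centralBinom_mul_sum_sq_choose_add (hp : p.Prime) (hp2 : p ≠ 2) {m : ℕ}
    (hm : p = 2 * m + 1) :
    (m.centralBinom : R) * ∑ k ∈ range (m + 1), ((m + k).choose k : R) ^ 2 = 1 := by
  have hq := natCast_sq_eq_zero p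
  have hsign : ∀ k : ℕ, ((-1 : R) ^ k) ^ 2 = 1 := fun k => by
    rw [← pow_mul, pow_mul', neg_one_sq, one_pow]
  have hsq : ∀ k ∈ range (m + 1), ((m + k).choose k : R) ^ 2 =
      (m.choose k) ^ 2 - 2 * (p * ((m.choose k) ^ 2 * (H m - H (m - k)))) := by
    intro k hk
    have h := neg_one_pow_mul_choose_add hp hm (Nat.lt_succ_iff.1 (mem_range.1 hk))
    linear_combination
      ((-1) ^ k * ((m + k).choose k : R) + m.choose k * (1 - p * (H m - H (m - k)))) * h
      - ((m + k).choose k : R) ^ 2 * hsign k + ((m.choose k : R) * (H m - H (m - k))) ^ 2 * hq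
  have hcentral := neg_one_pow_mul_choose_add hp hm (le_refl m)
  rw [← two_mul, ← Nat.centralBinom_eq_two_mul_choose, Nat.sub_self, Nat.choose_self,
    harmonicZMod_zero, Nat.cast_one, one_mul, sub_zero] at hcentral
  have hcentral_sq : (m.centralBinom : R) ^ 2 = 1 - 2 * p * H m := by
    linear_combination ((-1) ^ m * (m.centralBinom : R) + 1 - p * H m) * hcentral
      - (m.centralBinom : R) ^ 2 * hsign m + (H m) ^ 2 * hq
  have hH : (p : R) * H (2 * m) = 0 := by
    simpa [hm] using natCast_mul_harmonicZMod_sub_one hp hp2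
  rw [sum_congr rfl hsq, sum_sub_distrib, ← mul_sum, ← mul_sum,
    natCast_mul_sum_choose_sq_mul hp (by omega), sum_range_natCast_choose_sq]
  linear_combination (1 - 2 * p * (H (2 * m) - H m)) * hcentral_sq - 2 * hH
    + 4 * H m * (H (2 * m) - H m) * hq

end ZModPrimeSq

theorem stmt_15 (p : ℕ) (hp : p.Prime) (hp3 : 3 < p)
    (p' : ℕ) (hp' : p' = (p - 1) / 2) :
    ((p : ℤ)^2) ∣
      ((p - 1).choose p' : ℤ) * (∑ a ∈ Finset.Icc p' (p - 1), ((a.choose p' : ℤ))^2) - 1 := by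
  obtain ⟨m, hm⟩ := hp.odd_of_ne_two (by omega)
  obtain rfl : p' = m := by omega
  have hsum : ∑ a ∈ Icc p' (p - 1), (a.choose p' : ℤ) ^ 2 =
      ∑ k ∈ range (p' + 1), ((p' + k).choose k : ℤ) ^ 2 := by
    rw [← Ico_add_one_right_eq_Icc, sum_Ico_eq_sum_range, show p - 1 + 1 - p' = p' + 1 by omega]
    exact sum_congr rfl fun k _ => by rw [Nat.choose_symm_add]
  rw [hsum, show p - 1 = 2 * p' by omega, ← Nat.centralBinom_eq_two_mul_choose, ← Nat.cast_pow,
    ← ZMod.intCast_zmod_eq_zero_iff_dvd, Int.cast_sub, sub_eq_zero]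
  push_cast
  exact ZModPrimeSq.centralBinom_mul_sum_sq_choose_add hp (by omega) hm
end
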